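/- arXiv:1803.08471 — 3 statements merged into one kernel-verified Lean document; each statement's English description precedes it below -/
import Mathlib

section
/- Let α ∈ (0,1), let V be a positive integer, and let N be a positive integer. Let y, y' : Fin V → ℕ be two count vectors satisfying Σ_{v} |(y v : ℤ) - (y' v : ℤ)| ≤ N. Consider the geometric mechanism that outputs z ∈ ℤ^V with probability ∏_{v} 2Geo(z v - y v; α), i.e., adds independent two-sided geometric noise to each coordinate. Then for every subset S ⊆ (Fin V → ℤ), Σ_{z ∈ S} ∏_{v} 2Geo(z v - y v; α) ≤ exp(N · log(1/α)) · Σ_{z ∈ S} ∏_{v} 2Geo(z v - y' v; α). In other words, the geometric mechanism with parameter α is an (N, ε)-private randomized response method with ε = N · log(1/α). -/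
open scoped BigOperators

/-- The two-sided geometric pmf with parameter `α`: `2Geo(τ; α) = ((1-α)/(1+α)) · α^|τ|`. -/
noncomputable def twoGeoPMF (α : ℝ) (τ : ℤ) : ℝ := ((1 - α) / (1 + α)) * α ^ τ.natAbs

/-!
The density of the mechanism at `z` is `((1-α)/(1+α))^V · α^(∑ v, |z v - y v|)`. Moving the
input from `y` to `y'` changes the exponent by at most `∑ v, |y v - y' v| ≤ N` (triangle
inequality), so the density changes by a factor at most `α⁻¹ ^ N = exp (N log (1/α))`, pointwise
in `z`; summing over `S` gives the claim, since the densities are summable over `ℤ^V`.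
-/

theorem Summable.pi_prod_of_nonneg {ι κ : Type*} [Fintype ι] {f : ι → κ → ℝ}
    (hf₀ : ∀ i k, 0 ≤ f i k) (hf : ∀ i, Summable (f i)) :
    Summable fun x : ι → κ => ∏ i, f i (x i) := by
  classical
  refine summable_of_sum_le (c := ∏ i, ∑' k, f i k)
    (fun x => Finset.prod_nonneg fun i _ => hf₀ i (x i)) fun s => ?_
  let box : ∀ _ : ι, Finset κ := fun i => s.image (· i)
  have hs : s ⊆ Fintype.piFinset box := fun x hx =>
    Fintype.mem_piFinset.2 fun i => Finset.mem_image_of_mem (· i) hx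
  calc ∑ x ∈ s, ∏ i, f i (x i)
      ≤ ∑ x ∈ Fintype.piFinset box, ∏ i, f i (x i) :=
        Finset.sum_le_sum_of_subset_of_nonneg hs fun x _ _ =>
          Finset.prod_nonneg fun i _ => hf₀ i (x i)
    _ = ∏ i, ∑ k ∈ box i, f i k := (Finset.prod_univ_sum box f).symm
    _ ≤ ∏ i, ∑' k, f i k :=
        Finset.prod_le_prod (fun i _ => Finset.sum_nonneg fun k _ => hf₀ i k)
          fun i _ => (hf i).sum_le_tsum _ fun k _ => hf₀ i k

section twoGeoPMF

variable {α : ℝ}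

theorem twoGeoPMF_nonneg (hα₀ : 0 ≤ α) (hα₁ : α ≤ 1) (τ : ℤ) : 0 ≤ twoGeoPMF α τ :=
  mul_nonneg (div_nonneg (by linarith) (by linarith)) (pow_nonneg hα₀ _)

theorem summable_twoGeoPMF (hα₀ : 0 ≤ α) (hα₁ : α < 1) : Summable (twoGeoPMF α) := by
  have h := (summable_geometric_of_lt_one hα₀ hα₁).mul_left ((1 - α) / (1 + α))
  exact .of_nat_of_neg (by simpa [twoGeoPMF] using h) (by simpa [twoGeoPMF] using h)

theorem twoGeoPMF_le_inv_pow_mul (hα₀ : 0 < α) (hα₁ : α ≤ 1) (s t : ℤ) :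
    twoGeoPMF α s ≤ α⁻¹ ^ (s - t).natAbs * twoGeoPMF α t := by
  have htri : t.natAbs ≤ s.natAbs + (s - t).natAbs := by omega
  have hpow : α ^ s.natAbs ≤ α⁻¹ ^ (s - t).natAbs * α ^ t.natAbs :=
    calc α ^ s.natAbs = α⁻¹ ^ (s - t).natAbs * α ^ (s.natAbs + (s - t).natAbs) := by
          rw [pow_add, inv_pow]; field_simp
      _ ≤ α⁻¹ ^ (s - t).natAbs * α ^ t.natAbs :=
          mul_le_mul_of_nonneg_left (pow_le_pow_of_le_one hα₀.le hα₁ htri) (by positivity)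
  unfold twoGeoPMF
  calc (1 - α) / (1 + α) * α ^ s.natAbs
      ≤ (1 - α) / (1 + α) * (α⁻¹ ^ (s - t).natAbs * α ^ t.natAbs) :=
        mul_le_mul_of_nonneg_left hpow (div_nonneg (by linarith) (by linarith))
    _ = α⁻¹ ^ (s - t).natAbs * ((1 - α) / (1 + α) * α ^ t.natAbs) := by ring

theorem prod_twoGeoPMF_le_inv_pow_mul (hα₀ : 0 < α) (hα₁ : α ≤ 1) {ι : Type*} [Fintype ι]
    {y y' : ι → ℤ} {N : ℕ} (hdist : ∑ v, |y v - y' v| ≤ N) (z : ι → ℤ) :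
    ∏ v, twoGeoPMF α (z v - y v) ≤ α⁻¹ ^ N * ∏ v, twoGeoPMF α (z v - y' v) := by
  have hshift : ∑ v, (y' v - y v).natAbs ≤ N := by
    zify
    simpa only [abs_sub_comm] using hdist
  calc ∏ v, twoGeoPMF α (z v - y v)
      ≤ ∏ v, α⁻¹ ^ (y' v - y v).natAbs * twoGeoPMF α (z v - y' v) :=
        Finset.prod_le_prod (fun v _ => twoGeoPMF_nonneg hα₀.le hα₁ _) fun v _ => by
          simpa only [sub_sub_sub_cancel_left] using
            twoGeoPMF_le_inv_pow_mul hα₀ hα₁ (z v - y v) (z v - y' v)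
    _ = α⁻¹ ^ (∑ v, (y' v - y v).natAbs) * ∏ v, twoGeoPMF α (z v - y' v) := by
        rw [Finset.prod_mul_distrib, Finset.prod_pow_eq_pow_sum]
    _ ≤ α⁻¹ ^ N * ∏ v, twoGeoPMF α (z v - y' v) := by
        gcongr
        · exact Finset.prod_nonneg fun v _ => twoGeoPMF_nonneg hα₀.le hα₁ _
        · exact one_le_inv₀ hα₀ |>.2 hα₁

end twoGeoPMF

theorem geometric_mechanism_limited_precision_local_privacy_general
    (α : ℝ) (hα0 : 0 < α) (hα1 : α < 1) (V : ℕ) (N : ℕ)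
    (y y' : Fin V → ℕ)
    (hdist : ∑ v : Fin V, |(y v : ℤ) - (y' v : ℤ)| ≤ (N : ℤ))
    (S : Set (Fin V → ℤ)) :
    ∑' z : S, ∏ v : Fin V, twoGeoPMF α ((z : Fin V → ℤ) v - (y v : ℤ)) ≤
      Real.exp ((N : ℝ) * Real.log (1 / α)) *
        ∑' z : S, ∏ v : Fin V, twoGeoPMF α ((z : Fin V → ℤ) v - (y' v : ℤ)) := by
  have hexp : Real.exp ((N : ℝ) * Real.log (1 / α)) = α⁻¹ ^ N := by
    rw [Real.exp_nat_mul, Real.exp_log (by positivity), one_div]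
  have hsummable : Summable fun z : Fin V → ℤ => ∏ v, twoGeoPMF α (z v - y' v) :=
    Summable.pi_prod_of_nonneg (f := fun v τ => twoGeoPMF α (τ - y' v))
      (fun _ _ => twoGeoPMF_nonneg hα0.le hα1.le _) fun v =>
        (summable_twoGeoPMF hα0.le hα1).comp_injective sub_left_injective
  have hbound (z : S) := prod_twoGeoPMF_le_inv_pow_mul hα0 hα1.le hdist (z : Fin V → ℤ)
  have hdominant := (hsummable.subtype S).mul_left (α⁻¹ ^ N)
  have hsummable_y := hdominant.of_nonneg_of_le
    (fun z => Finset.prod_nonneg fun v _ => twoGeoPMF_nonneg hα0.le hα1.le _) hbound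
  rw [hexp, ← tsum_mul_left]
  exact hsummable_y.tsum_le_tsum hbound hdominant

/-- The geometric mechanism (adding independent two-sided geometric noise with parameter
`α ∈ (0,1)` to each coordinate of a count vector) is an `(N, ε)`-private randomized
response method with `ε = N · log(1/α)`. -/
theorem geometric_mechanism_limited_precision_local_privacy
    (α : ℝ) (hα0 : 0 < α) (hα1 : α < 1) (V : ℕ) (hV : 0 < V) (N : ℕ) (hN : 0 < N)
    (y y' : Fin V → ℕ)
    (hdist : ∑ v : Fin V, |(y v : ℤ) - (y' v : ℤ)| ≤ (N : ℤ))
    (S : Set (Fin V → ℤ)) :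
    ∑' z : S, ∏ v : Fin V, twoGeoPMF α ((z : Fin V → ℤ) v - (y v : ℤ)) ≤
      Real.exp ((N : ℝ) * Real.log (1 / α)) *
        ∑' z : S, ∏ v : Fin V, twoGeoPMF α ((z : Fin V → ℤ) v - (y' v : ℤ)) :=
  geometric_mechanism_limited_precision_local_privacy_general α hα0 hα1 V N y y' hdist S
end

section
/- Let α ∈ (0,1) and set θ = (1-α)/α (so that the exponential distribution with rate θ has mean α/(1-α)). Then for every τ ∈ ℤ, the exponential mixture of the Skellam pmf equals the two-sided geometric pmf: ∫_0^∞ ∫_0^∞ θ·exp(-θ·λ₊) · θ·exp(-θ·λ₋) · Skel(τ; λ₊, λ₋) dλ₊ dλ₋ = ((1-α)/(1+α)) · α^{|τ|}. That is, a two-sided geometric random variable with parameter α can be generated by drawing λ₊ and λ₋ independently from an exponential distribution with mean α/(1-α) and then drawing τ from Skel(λ₊, λ₋). -/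
open scoped BigOperators
open MeasureTheory

/-- The Poisson pmf with rate `λ`: `Pois(k; λ) = exp(-λ) · λ^k / k!`. -/
noncomputable def poisPMF (lam : ℝ) (k : ℕ) : ℝ :=
  Real.exp (-lam) * lam ^ k / (Nat.factorial k)

/-- The Skellam pmf with rates `λ₁, λ₂`, the distribution of the difference of two
independent Poisson random variables:
`Skel(τ; λ₁, λ₂) = Σ_{m=0}^∞ Pois(m + τ⁺; λ₁) · Pois(m + τ⁻; λ₂)`. -/
noncomputable def skelPMF (lam₁ lam₂ : ℝ) (τ : ℤ) : ℝ :=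
  ∑' m : ℕ, poisPMF lam₁ (m + τ.toNat) * poisPMF lam₂ (m + (-τ).toNat)

/-!
Mixing a Poisson rate over an exponential law of rate `θ` is a Gamma integral, and it turns
`Pois(k; λ)` into the geometric pmf `(1 - α) α^k` with `α = 1/(1 + θ)`. The Skellam pmf is the law
of a difference of independent Poisson variables, so mixing both rates independently yields the
law of a difference of two independent geometric variables, and summing the geometric series
`∑ₘ (1 - α)² α^(2m + |τ|)` gives `((1 - α)/(1 + α)) α^|τ|`.
-/

open Set Real
open scoped Nat

noncomputable def geomPMF (α : ℝ) (k : ℕ) : ℝ := (1 - α) * α ^ k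

lemma geomPMF_nonneg {α : ℝ} (hα0 : 0 ≤ α) (hα1 : α ≤ 1) (k : ℕ) : 0 ≤ geomPMF α k :=
  mul_nonneg (sub_nonneg.2 hα1) (pow_nonneg hα0 k)

lemma geomPMF_le_one {α : ℝ} (hα0 : 0 ≤ α) (hα1 : α ≤ 1) (k : ℕ) : geomPMF α k ≤ 1 :=
  mul_le_one₀ (by linarith) (pow_nonneg hα0 k) (pow_le_one₀ hα0 hα1)

lemma summable_geomPMF_add {α : ℝ} (hα0 : 0 ≤ α) (hα1 : α < 1) (p : ℕ) :
    Summable fun m : ℕ => geomPMF α (m + p) :=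
  ((summable_geometric_of_lt_one hα0 hα1).mul_left ((1 - α) * α ^ p)).congr fun m => by
    simp only [geomPMF, pow_add]; ring

lemma tsum_geomPMF_mul_geomPMF {α : ℝ} (hα0 : 0 ≤ α) (hα1 : α < 1) (τ : ℤ) :
    ∑' m : ℕ, geomPMF α (m + τ.toNat) * geomPMF α (m + (-τ).toNat) = twoGeoPMF α τ := by
  have hα2 : α ^ 2 < 1 := by nlinarith
  have hτ : τ.toNat + (-τ).toNat = τ.natAbs := by omega
  calc ∑' m : ℕ, geomPMF α (m + τ.toNat) * geomPMF α (m + (-τ).toNat)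
      = ∑' m : ℕ, (1 - α) ^ 2 * α ^ τ.natAbs * (α ^ 2) ^ m := by
        congr 1; ext m; simp only [geomPMF, ← hτ]; ring
    _ = (1 - α) ^ 2 * α ^ τ.natAbs * (1 - α ^ 2)⁻¹ := by
        rw [tsum_mul_left, tsum_geometric_of_lt_one (by positivity) hα2]
    _ = twoGeoPMF α τ := by
        have : 1 + α ≠ 0 := by linarith
        rw [twoGeoPMF, show 1 - α ^ 2 = (1 - α) * (1 + α) by ring]
        field_simp

lemma poisPMF_nonneg {lam : ℝ} (h : 0 ≤ lam) (k : ℕ) : 0 ≤ poisPMF lam k := by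
  unfold poisPMF; positivity

lemma summable_poisPMF_add (lam : ℝ) (p : ℕ) : Summable fun m : ℕ => poisPMF lam (m + p) :=
  (((summable_pow_div_factorial lam).comp_injective (add_left_injective p)).mul_left
    (exp (-lam))).congr fun m => by simp only [poisPMF, Function.comp_apply]; ring

lemma integrableOn_pow_mul_exp_neg_mul (k : ℕ) {b : ℝ} (hb : 0 < b) :
    IntegrableOn (fun x : ℝ => x ^ k * exp (-(b * x))) (Ioi 0) := by
  refine (integrableOn_rpow_mul_exp_neg_mul_rpow (s := k) (p := 1)
    (neg_one_lt_zero.trans_le k.cast_nonneg) one_pos hb).congr_fun (fun x _ => ?_) measurableSet_Ioi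
  simp only [rpow_natCast, rpow_one, neg_mul]

lemma integral_pow_mul_exp_neg_mul (k : ℕ) {b : ℝ} (hb : 0 < b) :
    ∫ x in Ioi (0 : ℝ), x ^ k * exp (-(b * x)) = k ! / b ^ (k + 1) := by
  have h := integral_rpow_mul_exp_neg_mul_Ioi (a := k + 1) (by positivity) hb
  simp only [add_sub_cancel_right, rpow_natCast] at h
  rw [h, Gamma_nat_eq_factorial, ← Nat.cast_succ, rpow_natCast, one_div, inv_pow, inv_mul_eq_div]

lemma integral_tsum_of_summable_integral_of_nonneg {X : Type*} [MeasurableSpace X]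
    {μ : Measure X} {f : ℕ → X → ℝ} (hf : ∀ m, 0 ≤ᵐ[μ] f m) (hfi : ∀ m, Integrable (f m) μ)
    (hfs : Summable fun m => ∫ x, f m x ∂μ) :
    ∫ x, ∑' m, f m x ∂μ = ∑' m, ∫ x, f m x ∂μ := by
  refine (integral_tsum_of_summable_integral_norm hfi (hfs.congr fun m => ?_)).symm
  exact integral_congr_ae ((hf m).mono fun x hx => (norm_of_nonneg hx).symm)

section ExponentialMixture

variable {θ : ℝ}

lemma expDensity_mul_poisPMF (lam : ℝ) (k : ℕ) :
    θ * exp (-θ * lam) * poisPMF lam k = θ / k ! * (lam ^ k * exp (-((θ + 1) * lam))) := by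
  rw [poisPMF, show -((θ + 1) * lam) = -θ * lam + -lam by ring, exp_add]
  ring

lemma integrableOn_expDensity_mul_poisPMF (hθ : 0 < θ) (k : ℕ) :
    IntegrableOn (fun lam => θ * exp (-θ * lam) * poisPMF lam k) (Ioi 0) := by
  simp only [expDensity_mul_poisPMF]
  exact (integrableOn_pow_mul_exp_neg_mul k (by linarith)).const_mul _

lemma integral_expDensity_mul_poisPMF (hθ : 0 < θ) (k : ℕ) :
    ∫ lam in Ioi (0 : ℝ), θ * exp (-θ * lam) * poisPMF lam k = geomPMF (θ + 1)⁻¹ k := by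
  simp only [expDensity_mul_poisPMF]
  rw [integral_const_mul, integral_pow_mul_exp_neg_mul k (by linarith), geomPMF, inv_pow]
  field_simp
  ring

lemma integral_expDensity_mul_tsum_mul_poisPMF (hθ : 0 < θ) (p : ℕ) {c : ℕ → ℝ}
    (hc0 : ∀ m, 0 ≤ c m) (hc : Summable c) :
    ∫ lam in Ioi (0 : ℝ), θ * exp (-θ * lam) * ∑' m : ℕ, c m * poisPMF lam (m + p)
      = ∑' m : ℕ, c m * geomPMF (θ + 1)⁻¹ (m + p) := by
  have hα0 : 0 ≤ (θ + 1)⁻¹ := by positivity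
  have hα1 : (θ + 1)⁻¹ ≤ 1 := inv_le_one_of_one_le₀ (by linarith)
  have hterm : ∀ m, ∫ lam in Ioi (0 : ℝ), c m * (θ * exp (-θ * lam) * poisPMF lam (m + p))
      = c m * geomPMF (θ + 1)⁻¹ (m + p) := fun m => by
    rw [integral_const_mul, integral_expDensity_mul_poisPMF hθ]
  simp_rw [← tsum_mul_left, mul_left_comm _ (c _), ← hterm]
  refine integral_tsum_of_summable_integral_of_nonneg (fun m => ?_)
    (fun m => (integrableOn_expDensity_mul_poisPMF hθ _).const_mul _) ?_
  · filter_upwards [ae_restrict_mem measurableSet_Ioi] with lam hlam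
    exact mul_nonneg (hc0 m) (mul_nonneg (by positivity) (poisPMF_nonneg hlam.le _))
  · simp_rw [hterm]
    exact hc.of_nonneg_of_le (fun m => mul_nonneg (hc0 m) (geomPMF_nonneg hα0 hα1 _))
      fun m => mul_le_of_le_one_right (hc0 m) (geomPMF_le_one hα0 hα1 _)

end ExponentialMixture

/-- A two-sided geometric random variable with parameter `α` can be generated by drawing
`λ₊, λ₋` independently from an exponential distribution with rate `θ = (1-α)/α`
(mean `α/(1-α)`) and then drawing `τ ~ Skel(λ₊, λ₋)`. -/
theorem twoSidedGeometric_as_exponential_mixture_of_skellam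
    (α : ℝ) (hα0 : 0 < α) (hα1 : α < 1) (θ : ℝ) (hθ : θ = (1 - α) / α) (τ : ℤ) :
    ∫ lamp in Set.Ioi (0 : ℝ), ∫ lamm in Set.Ioi (0 : ℝ),
        θ * Real.exp (-θ * lamp) * (θ * Real.exp (-θ * lamm)) * skelPMF lamp lamm τ
      = twoGeoPMF α τ := by
  have hθ0 : 0 < θ := hθ ▸ div_pos (sub_pos.2 hα1) hα0
  have hα : (θ + 1)⁻¹ = α := by rw [hθ]; field_simp; ring
  have inner : ∀ lamp ∈ Ioi (0 : ℝ), ∫ lamm in Ioi (0 : ℝ),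
      θ * exp (-θ * lamp) * (θ * exp (-θ * lamm)) * skelPMF lamp lamm τ
      = θ * exp (-θ * lamp) *
          ∑' m : ℕ, geomPMF α (m + (-τ).toNat) * poisPMF lamp (m + τ.toNat) := by
    intro lamp hlamp
    simp_rw [mul_assoc (θ * exp (-θ * lamp)), integral_const_mul, skelPMF]
    rw [integral_expDensity_mul_tsum_mul_poisPMF hθ0 _ (c := fun m => poisPMF lamp (m + τ.toNat))
      (fun m => poisPMF_nonneg hlamp.le _) (summable_poisPMF_add _ _), hα]
    simp_rw [mul_comm (poisPMF _ _)]
  rw [setIntegral_congr_fun measurableSet_Ioi inner,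
    integral_expDensity_mul_tsum_mul_poisPMF hθ0 _ (fun m => geomPMF_nonneg hα0.le hα1.le _)
      (summable_geomPMF_add hα0.le hα1 _), hα, ← tsum_geomPMF_mul_geomPMF hα0.le hα1 τ]
  exact tsum_congr fun m => mul_comm _ _
end

section
/- Let λ₁, λ₂ > 0, let τ ∈ ℤ, and let m ∈ ℕ. Consider two independent Poisson random variables y₁ ~ Pois(λ₁) and y₂ ~ Pois(λ₂). The joint probability that their difference equals τ and their minimum equals m, namely Pois(m + max(τ,0); λ₁) · Pois(m + max(-τ,0); λ₂), factorizes as the product of the Skellam pmf and the Bessel pmf: Pois(m + max(τ,0); λ₁) · Pois(m + max(-τ,0); λ₂) = Skel(τ; λ₁, λ₂) · Bes(m; |τ|, λ₁·λ₂). Consequently, the difference y₁ - y₂ is marginally Skellam(λ₁, λ₂) and, conditioned on y₁ - y₂ = τ, the minimum min(y₁, y₂) has the Bessel distribution with order |τ| and parameter λ₁·λ₂ (i.e., scale 2√(λ₁λ₂)). -/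
/-- The Bessel pmf with integer order `ν` and parameter `c`:
`Bes(m; ν, c) = (c^m / (m!·(m+ν)!)) / (Σ_{m'} c^{m'} / (m'!·(m'+ν)!))`. -/
noncomputable def besPMF (ν : ℕ) (c : ℝ) (m : ℕ) : ℝ :=
  (c ^ m / (Nat.factorial m * Nat.factorial (m + ν))) /
    ∑' m' : ℕ, c ^ m' / (Nat.factorial m' * Nat.factorial (m' + ν))

/-!
With `c = λ₁λ₂`, the joint probability of `y₁ - y₂ = τ` and `min(y₁, y₂) = m` is
`C(τ) · c^m / (m! (m + |τ|)!)` with a prefactor `C(τ)` independent of `m`.  Summing over `m` gives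
`Skel(τ) = C(τ) · Z` with `Z = Σ c^m / (m! (m + |τ|)!)`, and `Bes(m) = c^m / (m! (m + |τ|)!) / Z`
with `Z > 0` (as `c ≥ 0` and its `m = 0` term is `1 / |τ|!`), so `Z` cancels in the product.
-/

open Nat

noncomputable def besselTerm (ν : ℕ) (c : ℝ) (m : ℕ) : ℝ :=
  c ^ m / (m ! * (m + ν)!)

lemma besPMF_eq_besselTerm_div (ν : ℕ) (c : ℝ) (m : ℕ) :
    besPMF ν c m = besselTerm ν c m / ∑' m', besselTerm ν c m' :=
  rfl

lemma summable_besselTerm (ν : ℕ) (c : ℝ) : Summable (besselTerm ν c) := by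
  refine Summable.of_norm_bounded (Real.summable_pow_div_factorial |c|) fun m => ?_
  have hfac : (1 : ℝ) ≤ (m + ν)! := by exact_mod_cast (m + ν).factorial_pos
  rw [besselTerm, norm_div, norm_pow, Real.norm_eq_abs, norm_mul, Real.norm_natCast,
    Real.norm_natCast]
  gcongr
  exact le_mul_of_one_le_right (by positivity) hfac

lemma tsum_besselTerm_pos (ν : ℕ) {c : ℝ} (hc : 0 ≤ c) : 0 < ∑' m, besselTerm ν c m := by
  refine (summable_besselTerm ν c).tsum_pos (fun m => by unfold besselTerm; positivity) 0 ?_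
  simp only [besselTerm, pow_zero, factorial_zero, cast_one, one_mul, zero_add]
  positivity

lemma poisPMF_mul_poisPMF_add (lam₁ lam₂ : ℝ) (a b m : ℕ) :
    poisPMF lam₁ (m + a) * poisPMF lam₂ (m + b)
      = Real.exp (-lam₁) * lam₁ ^ a * (Real.exp (-lam₂) * lam₂ ^ b)
        * ((lam₁ * lam₂) ^ m / ((m + a)! * (m + b)!)) := by
  simp only [poisPMF, pow_add, mul_pow]
  ring

lemma factorial_add_toNat_mul_factorial_add_toNat_neg (τ : ℤ) (m : ℕ) :
    (m + τ.toNat)! * (m + (-τ).toNat)! = m ! * (m + τ.natAbs)! := by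
  rcases le_or_gt 0 τ with hτ | hτ
  · rw [show (-τ).toNat = 0 by omega, show τ.natAbs = τ.toNat by omega, add_zero, mul_comm]
  · rw [show τ.toNat = 0 by omega, show τ.natAbs = (-τ).toNat by omega, add_zero]

lemma poisPMF_mul_poisPMF_toNat (lam₁ lam₂ : ℝ) (τ : ℤ) (m : ℕ) :
    poisPMF lam₁ (m + τ.toNat) * poisPMF lam₂ (m + (-τ).toNat)
      = Real.exp (-lam₁) * lam₁ ^ τ.toNat * (Real.exp (-lam₂) * lam₂ ^ (-τ).toNat)
        * besselTerm τ.natAbs (lam₁ * lam₂) m := by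
  rw [poisPMF_mul_poisPMF_add, besselTerm, ← cast_mul,
    factorial_add_toNat_mul_factorial_add_toNat_neg, cast_mul]

lemma skelPMF_eq_mul_tsum_besselTerm (lam₁ lam₂ : ℝ) (τ : ℤ) :
    skelPMF lam₁ lam₂ τ
      = Real.exp (-lam₁) * lam₁ ^ τ.toNat * (Real.exp (-lam₂) * lam₂ ^ (-τ).toNat)
        * ∑' m, besselTerm τ.natAbs (lam₁ * lam₂) m := by
  rw [skelPMF, ← tsum_mul_left]
  exact tsum_congr (poisPMF_mul_poisPMF_toNat lam₁ lam₂ τ)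

/-- For two independent Poisson variables `y₁ ~ Pois(λ₁)`, `y₂ ~ Pois(λ₂)`, the joint
probability that their difference is `τ` and their minimum is `m` factorizes as the
Skellam pmf of `τ` times the Bessel pmf of `m` with order `|τ|` and parameter `λ₁·λ₂`:
the difference is marginally Skellam and, conditioned on the difference, the minimum
is Bessel distributed. -/
theorem poisson_difference_minimum_skellam_bessel_factorization
    (lam₁ lam₂ : ℝ) (h₁ : 0 < lam₁) (h₂ : 0 < lam₂) (τ : ℤ) (m : ℕ) :
    poisPMF lam₁ (m + τ.toNat) * poisPMF lam₂ (m + (-τ).toNat)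
      = skelPMF lam₁ lam₂ τ * besPMF τ.natAbs (lam₁ * lam₂) m := by
  have hZ := tsum_besselTerm_pos τ.natAbs (mul_pos h₁ h₂).le
  rw [poisPMF_mul_poisPMF_toNat, skelPMF_eq_mul_tsum_besselTerm, besPMF_eq_besselTerm_div,
    mul_assoc _ (∑' _, _), mul_div_cancel₀ _ hZ.ne']
end
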